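/- arXiv:2301.04301 — 6 statements merged into one kernel-verified Lean document; each statement's English description precedes it below -/
import Mathlib

section
/- Data-processing for the max-relative entropy under positive maps: Let n and m be finite index types and let Φ : Matrix n n ℂ →ₗ[ℂ] Matrix m m ℂ be a positive linear map, i.e., Φ maps every positive semidefinite matrix to a positive semidefinite matrix (in particular, any completely positive map qualifies). Then for all positive semidefinite P, Q ∈ Matrix n n ℂ and every λ ∈ ℝ, if e^λ·Q − P is positive semidefinite then e^λ·Φ(Q) − Φ(P) is positive semidefinite; consequently D_max(Φ(P) ‖ Φ(Q)) ≤ D_max(P ‖ Q) in the extended reals. -/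
open Matrix
open scoped ComplexOrder

/-- The max-relative entropy `D_max(P‖Q)`, as an extended real:
the infimum of all `λ ∈ ℝ` such that `e^λ • Q - P` is positive semidefinite,
with value `+∞` if no such `λ` exists. -/
noncomputable def Dmax {n : Type*} [Fintype n] (P Q : Matrix n n ℂ) : EReal :=
  sInf {x : EReal | ∃ lam : ℝ, x = (lam : EReal) ∧ (Real.exp lam • Q - P).PosSemidef}

/-- Data-processing for the max-relative entropy under positive linear maps. -/
theorem dmax_dpi_positive_map {n m : Type*} [Fintype n] [Fintype m]
    (Φ : Matrix n n ℂ →ₗ[ℂ] Matrix m m ℂ)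
    (hΦ : ∀ M : Matrix n n ℂ, M.PosSemidef → (Φ M).PosSemidef)
    (P Q : Matrix n n ℂ) (hP : P.PosSemidef) (hQ : Q.PosSemidef) :
    (∀ lam : ℝ, (Real.exp lam • Q - P).PosSemidef →
      (Real.exp lam • Φ Q - Φ P).PosSemidef)
    ∧ Dmax (Φ P) (Φ Q) ≤ Dmax P Q := by
  have key : ∀ lam : ℝ, (Real.exp lam • Q - P).PosSemidef →
      (Real.exp lam • Φ Q - Φ P).PosSemidef := by
    intro lam h
    have := hΦ _ h
    have heq : Φ (Real.exp lam • Q - P) = Real.exp lam • Φ Q - Φ P := by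
      have h1 : (Real.exp lam : ℝ) • Q = ((Real.exp lam : ℂ)) • Q := by
        ext i j; simp [Matrix.smul_apply, Complex.real_smul]
      have h2 : (Real.exp lam : ℝ) • Φ Q = ((Real.exp lam : ℂ)) • Φ Q := by
        ext i j; simp [Matrix.smul_apply, Complex.real_smul]
      rw [h1, h2, map_sub, _root_.map_smul]
    rwa [heq] at this
  refine ⟨key, ?_⟩
  apply sInf_le_sInf
  rintro x ⟨lam, rfl, h⟩
  exact ⟨lam, rfl, key lam h⟩
end

section
/- Cardinality bound for the max common information: Let A and C be finite index types with cardinalities d_A and d_C, and let ρ be a density matrix on A ⊗ C admitting an ensemble decomposition (n, p, α, γ), i.e., p is a probability vector on Fin n, each α_x is a density matrix on A, each γ_x is a density matrix on C, and Σ_x p_x · α_x ⊗ γ_x = ρ. Then there exists an ensemble decomposition (m, q, β, δ) of ρ with m ≤ d_A²·d_C² + 3 such that I↑_max(AC:X) of its classical extension Σ_i q_i · (β_i ⊗ δ_i) ⊗ E_ii is at most I↑_max(AC:X) of the classical extension Σ_x p_x · (α_x ⊗ γ_x) ⊗ E_xx of the original decomposition. -/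
open Matrix
open scoped ComplexOrder Kronecker

/-- A density matrix: positive semidefinite with trace 1. -/
def IsDensity {n : Type*} [Fintype n] (ρ : Matrix n n ℂ) : Prop :=
  ρ.PosSemidef ∧ ρ.trace = 1

/-- Partial trace over the second tensor factor. -/
noncomputable def ptraceSnd {S X : Type*} [Fintype S] [Fintype X]
    (ρ : Matrix (S × X) (S × X) ℂ) : Matrix S S ℂ :=
  Matrix.of fun s s' => ∑ x, ρ (s, x) (s', x)

/-- The max-mutual information `I↑_max(S:X)`. -/
noncomputable def Iupmax {S X : Type*} [Fintype S] [Fintype X]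
    (ρ : Matrix (S × X) (S × X) ℂ) : EReal :=
  sInf {z : EReal | ∃ σ : Matrix X X ℂ, IsDensity σ ∧ z = Dmax ρ (ptraceSnd ρ ⊗ₖ σ)}

/-- The classical extension `Σ_i p_i (α_i ⊗ γ_i) ⊗ E_ii` of an ensemble. -/
noncomputable def cqExt {A C : Type*} [Fintype A] [Fintype C] (m : ℕ) (p : Fin m → ℝ)
    (α : Fin m → Matrix A A ℂ) (γ : Fin m → Matrix C C ℂ) :
    Matrix ((A × C) × Fin m) ((A × C) × Fin m) ℂ :=
  ∑ i, p i • ((α i ⊗ₖ γ i) ⊗ₖ Matrix.single i i (1 : ℂ))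

/-!
Write `M x = α x ⊗ γ x` and let `t x` be the least `t` with `t • ρ - M x ⪰ 0`, i.e.
`t x = exp D_max(M x ‖ ρ)`. Compressing `e^λ • ρ ⊗ σ - Σ p x • M x ⊗ E_xx ⪰ 0` to the block `x`
gives `p x * t x ≤ e^λ * σ x x`, so `I↑_max(AC:X) ≥ log Σ p x * t x`; conversely any ensemble
with `t x • ρ - M x ⪰ 0` reaches `log Σ p x * t x` with the diagonal `σ x x ∝ p x * t x`.
Both `ρ = Σ p x • M x` and `Σ p x * t x` are linear in the weights, so Carathéodory's theorem for
the points `(M x, t x)` in (Hermitian matrices) × ℝ, of real dimension `d_A² d_C² + 1`, yields a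
subensemble with at most `d_A² d_C² + 2` members, the same state and the same value of the sum.
-/

lemma posSemidef_single {m : Type*} [DecidableEq m] (i : m) :
    (single i i (1 : ℂ)).PosSemidef :=
  diagonal_single i (1 : ℂ) ▸ PosSemidef.diagonal (Pi.single_nonneg.2 zero_le_one)

lemma posSemidef_inv_smul_sub_of_sum {d ι : Type*} [Fintype ι] {p : ι → ℝ}
    {M : ι → Matrix d d ℂ} (hp : ∀ i, 0 ≤ p i) (hM : ∀ i, (M i).PosSemidef) {i : ι}
    (hi : 0 < p i) : ((p i)⁻¹ • ∑ j, p j • M j - M i).PosSemidef := by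
  classical
  have hrest : ∑ j, p j • M j - p i • M i = ∑ j ∈ Finset.univ.erase i, p j • M j := by
    rw [← Finset.add_sum_erase _ _ (Finset.mem_univ i), add_sub_cancel_left]
  have hsplit : (p i)⁻¹ • ∑ j, p j • M j - M i =
      (p i)⁻¹ • ∑ j ∈ Finset.univ.erase i, p j • M j := by
    rw [← hrest, smul_sub, smul_smul, inv_mul_cancel₀ hi.ne', one_smul]
  rw [hsplit]
  exact (posSemidef_sum _ fun j _ => (hM j).smul (hp j)).smul (inv_nonneg.2 hi.le)

lemma IsDensity.kronecker {A C : Type*} [Fintype A] [Fintype C] {α : Matrix A A ℂ}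
    {γ : Matrix C C ℂ} (hα : IsDensity α) (hγ : IsDensity γ) : IsDensity (α ⊗ₖ γ) := by
  classical
  exact ⟨hα.1.kronecker hγ.1, by rw [trace_kronecker, hα.2, hγ.2, mul_one]⟩

section MinScale

variable {d : Type*} [Fintype d]

/-- `exp D_max(M ‖ ρ)`; it is the junk value `0` when no `t • ρ` dominates `M`. -/
noncomputable def minScale (ρ M : Matrix d d ℂ) : ℝ :=
  sInf {t : ℝ | (t • ρ - M).PosSemidef}

variable {ρ M : Matrix d d ℂ}

lemma one_le_of_posSemidef_smul_sub (hρ : ρ.trace = 1) (hM : M.trace = 1) {t : ℝ}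
    (h : (t • ρ - M).PosSemidef) : 1 ≤ t := by
  have := h.trace_nonneg
  rw [trace_sub, trace_smul, hρ, hM, Complex.real_smul, mul_one, sub_nonneg] at this
  exact_mod_cast this

lemma isClosed_setOf_posSemidef_smul_sub (hρ : ρ.IsHermitian) (hM : M.IsHermitian) :
    IsClosed {t : ℝ | (t • ρ - M).PosSemidef} := by
  have hset : {t : ℝ | (t • ρ - M).PosSemidef} = ⋂ v : d → ℂ,
      (fun t : ℝ => (t : ℂ) * (star v ⬝ᵥ ρ *ᵥ v) - star v ⬝ᵥ M *ᵥ v) ⁻¹' Set.Ici 0 := by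
    ext t
    simp [posSemidef_iff_dotProduct_mulVec, (hρ.smul (.all t)).sub hM, sub_mulVec, smul_mulVec]
  rw [hset]
  exact isClosed_iInter fun v => isClosed_Ici.preimage (by fun_prop)

lemma minScale_le (hρ : ρ.trace = 1) (hM : M.trace = 1) {t : ℝ}
    (h : (t • ρ - M).PosSemidef) : minScale ρ M ≤ t :=
  csInf_le ⟨1, fun _ hs => one_le_of_posSemidef_smul_sub hρ hM hs⟩ h

lemma one_le_minScale (hρ : ρ.trace = 1) (hM : M.trace = 1)
    (hne : ∃ t : ℝ, (t • ρ - M).PosSemidef) : 1 ≤ minScale ρ M :=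
  le_csInf hne fun _ hs => one_le_of_posSemidef_smul_sub hρ hM hs

lemma posSemidef_minScale_smul_sub (hρ : IsDensity ρ) (hM : IsDensity M)
    (hne : ∃ t : ℝ, (t • ρ - M).PosSemidef) : (minScale ρ M • ρ - M).PosSemidef :=
  (isClosed_setOf_posSemidef_smul_sub hρ.1.isHermitian hM.1.isHermitian).csInf_mem hne
    ⟨1, fun _ hs => one_le_of_posSemidef_smul_sub hρ.2 hM.2 hs⟩

end MinScale

/-- For Hermitian `M`, `M j i = conj (M i j)`, so the values `re + im` at `(i, j)` and `(j, i)`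
determine `M i j`: this map is injective on Hermitian matrices. -/
noncomputable def reAddIm {d : Type*} : Matrix d d ℂ →ₗ[ℝ] Matrix d d ℝ :=
  (Complex.reLm + Complex.imLm).mapMatrix

lemma Matrix.IsHermitian.eq_of_reAddIm_eq {d : Type*} {M N : Matrix d d ℂ} (hM : M.IsHermitian)
    (hN : N.IsHermitian) (h : reAddIm M = reAddIm N) : M = N := by
  rw [← sub_eq_zero] at h ⊢
  rw [← map_sub] at h
  have hD := hM.sub hN
  ext i j
  have hij := congrFun (congrFun h i) j
  have hji := congrFun (congrFun h j) i
  have hconj : (M - N) j i = star ((M - N) i j) := by rw [← hD.apply i j]; simp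
  simp only [reAddIm, LinearMap.mapMatrix_apply, map_apply, LinearMap.add_apply,
    Complex.reLm_coe, Complex.imLm_coe, zero_apply, hconj, Complex.star_def,
    Complex.conj_re, Complex.conj_im] at hij hji
  apply Complex.ext <;> simp only [zero_apply, Complex.zero_re, Complex.zero_im] <;> linarith

lemma exists_fin_convex_combination_eq_sum {E ι : Type*} [AddCommGroup E] [Module ℝ E]
    [FiniteDimensional ℝ E] [Fintype ι] (v : ι → E) {w : ι → ℝ} (hw₀ : ∀ i, 0 ≤ w i)
    (hw₁ : ∑ i, w i = 1) :
    ∃ (k : ℕ) (q : Fin k → ℝ) (g : Fin k → ι), k ≤ Module.finrank ℝ E + 1 ∧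
      (∀ j, 0 ≤ q j) ∧ ∑ j, q j = 1 ∧ (∀ j, 0 < w (g j)) ∧
      ∑ j, q j • v (g j) = ∑ i, w i • v i := by
  classical
  have hmem : ∑ i, w i • v i ∈ convexHull ℝ (v '' {i | 0 < w i}) := by
    rw [← Finset.sum_filter_of_ne fun i _ hi => (hw₀ i).lt_of_ne' fun h => hi (by simp [h])]
    refine (convex_convexHull ℝ _).sum_mem (fun i _ => hw₀ i) ?_ fun i hi =>
      subset_convexHull ℝ _ ⟨i, (Finset.mem_filter.1 hi).2, rfl⟩
    rw [← hw₁]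
    exact Finset.sum_filter_of_ne fun i _ hi => (hw₀ i).lt_of_ne' hi
  obtain ⟨κ, _, z, q, hz, hind, hq₀, hq₁, hqz⟩ := eq_pos_convex_span_of_mem_convexHull hmem
  choose g hg hgz using fun a => hz ⟨a, rfl⟩
  let e := Fintype.equivFin κ
  refine ⟨Fintype.card κ, q ∘ e.symm, g ∘ e.symm,
    hind.card_le_finrank_succ.trans (by gcongr; exact Submodule.finrank_le _),
    fun j => (hq₀ _).le, by rw [← hq₁]; exact e.symm.sum_comp q, fun j => hg _, ?_⟩
  rw [← hqz, ← e.symm.sum_comp]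
  simp [hgz]

section ClassicalExtension

lemma sum_kronecker_single_apply {S m : Type*} [Fintype m] [DecidableEq m]
    (X : m → Matrix S S ℂ) (s s' : S) (x x' : m) :
    (∑ i, X i ⊗ₖ single i i (1 : ℂ)) (s, x) (s', x') = if x = x' then X x s s' else 0 := by
  rw [Matrix.sum_apply, Finset.sum_eq_single x (fun i _ hi => by simp [single, hi])
    (by simp)]
  by_cases h : x = x' <;> simp [single, h]

variable {A C : Type*} [Fintype A] [Fintype C] {m : ℕ} {p : Fin m → ℝ}
  {α : Fin m → Matrix A A ℂ} {γ : Fin m → Matrix C C ℂ}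

lemma cqExt_eq_sum : cqExt m p α γ = ∑ i, (p i • (α i ⊗ₖ γ i)) ⊗ₖ single i i (1 : ℂ) := by
  simp only [cqExt, smul_kronecker]

lemma ptraceSnd_cqExt : ptraceSnd (cqExt m p α γ) = ∑ i, p i • (α i ⊗ₖ γ i) := by
  ext s s'
  simp only [ptraceSnd, of_apply, cqExt_eq_sum, sum_kronecker_single_apply, if_true]
  exact (Matrix.sum_apply _ _ _ _).symm

lemma posSemidef_block_of_posSemidef_cqExt {ρ : Matrix (A × C) (A × C) ℂ}
    {σ : Matrix (Fin m) (Fin m) ℂ} (hσ : σ.IsHermitian) {r : ℝ}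
    (h : (r • (ρ ⊗ₖ σ) - cqExt m p α γ).PosSemidef) (x : Fin m) :
    ((r * (σ x x).re) • ρ - p x • (α x ⊗ₖ γ x)).PosSemidef := by
  convert h.submatrix (fun s => (s, x)) using 1
  ext s s'
  simp only [cqExt_eq_sum, submatrix_apply, Matrix.sub_apply, Matrix.smul_apply,
    kroneckerMap_apply, sum_kronecker_single_apply, if_true, Complex.real_smul,
    Complex.ofReal_mul]
  have hσx : ((σ x x).re : ℂ) = σ x x := by simpa using hσ.coe_re_apply_self x
  rw [hσx]
  ring

end ClassicalExtension

section MaxMutualInformation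

variable {S X : Type*} [Fintype S] [Fintype X] {ρ : Matrix (S × X) (S × X) ℂ}

lemma Iupmax_le_of_posSemidef {σ : Matrix X X ℂ} (hσ : IsDensity σ) {lam : ℝ}
    (h : (Real.exp lam • (ptraceSnd ρ ⊗ₖ σ) - ρ).PosSemidef) : Iupmax ρ ≤ lam :=
  calc Iupmax ρ ≤ Dmax ρ (ptraceSnd ρ ⊗ₖ σ) := sInf_le ⟨σ, hσ, rfl⟩
    _ ≤ lam := sInf_le ⟨lam, rfl, h⟩

lemma le_Iupmax_of_forall_posSemidef {μ : ℝ}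
    (h : ∀ σ : Matrix X X ℂ, IsDensity σ → ∀ lam : ℝ,
      (Real.exp lam • (ptraceSnd ρ ⊗ₖ σ) - ρ).PosSemidef → μ ≤ lam) :
    (μ : EReal) ≤ Iupmax ρ := by
  refine le_sInf ?_
  rintro _ ⟨σ, hσ, rfl⟩
  refine le_sInf ?_
  rintro _ ⟨lam, rfl, hlam⟩
  exact EReal.coe_le_coe_iff.2 (h σ hσ lam hlam)

end MaxMutualInformation

section ClassicalExtensionBounds

variable {A C : Type*} [Fintype A] [Fintype C] {m : ℕ} {p : Fin m → ℝ}
  {α : Fin m → Matrix A A ℂ} {γ : Fin m → Matrix C C ℂ} {t : Fin m → ℝ}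

lemma Iupmax_cqExt_le_log (hp : ∀ i, 0 ≤ p i) (ht : ∀ i, 0 ≤ t i) (hc : 0 < ∑ i, p i * t i)
    (hdom : ∀ i, (t i • ∑ j, p j • (α j ⊗ₖ γ j) - α i ⊗ₖ γ i).PosSemidef) :
    Iupmax (cqExt m p α γ) ≤ Real.log (∑ i, p i * t i) := by
  classical
  set c := ∑ i, p i * t i
  set σ : Matrix (Fin m) (Fin m) ℂ := diagonal fun i => ((p i * t i / c : ℝ) : ℂ)
  have hσ : IsDensity σ := by
    refine ⟨PosSemidef.diagonal fun i => ?_, ?_⟩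
    · exact Complex.zero_le_real.2 (div_nonneg (mul_nonneg (hp i) (ht i)) hc.le)
    · rw [trace_diagonal, ← Complex.ofReal_sum, ← Finset.sum_div, div_self hc.ne',
        Complex.ofReal_one]
  refine Iupmax_le_of_posSemidef hσ ?_
  have hblocks : Real.exp (Real.log c) • (ptraceSnd (cqExt m p α γ) ⊗ₖ σ) - cqExt m p α γ =
      ∑ i, (p i • (t i • ∑ j, p j • (α j ⊗ₖ γ j) - α i ⊗ₖ γ i)) ⊗ₖ single i i (1 : ℂ) := by
    ext ⟨s, x⟩ ⟨s', x'⟩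
    rw [Real.exp_log hc, ptraceSnd_cqExt, cqExt_eq_sum, Matrix.sub_apply,
      sum_kronecker_single_apply, sum_kronecker_single_apply]
    by_cases hx : x = x'
    · subst hx
      simp only [σ, Matrix.smul_apply, kroneckerMap_apply, diagonal_apply_eq, Matrix.sub_apply,
        if_true, Complex.real_smul, Complex.ofReal_div, Complex.ofReal_mul]
      field_simp
    · simp [hx, σ]
  rw [hblocks]
  exact posSemidef_sum _ fun i _ => ((hdom i).smul (hp i)).kronecker (posSemidef_single i)

lemma log_le_Iupmax_cqExt (hp : ∀ i, 0 ≤ p i) (hc : 0 < ∑ i, p i * t i)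
    (hmin : ∀ i, 0 < p i → ∀ s : ℝ,
      (s • ∑ j, p j • (α j ⊗ₖ γ j) - α i ⊗ₖ γ i).PosSemidef → t i ≤ s) :
    Real.log (∑ i, p i * t i) ≤ Iupmax (cqExt m p α γ) := by
  refine le_Iupmax_of_forall_posSemidef fun σ hσ lam h => ?_
  rw [ptraceSnd_cqExt] at h
  have hσ₀ : ∀ i, 0 ≤ (σ i i).re := fun i => (Complex.le_def.1 hσ.1.diag_nonneg).1
  have hσ₁ : ∑ i, (σ i i).re = 1 := by
    simpa [trace, Complex.re_sum] using congrArg Complex.re hσ.2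
  have hblock : ∀ i, p i * t i ≤ Real.exp lam * (σ i i).re := by
    intro i
    rcases (hp i).eq_or_lt with h0 | hpos
    · rw [← h0, zero_mul]
      exact mul_nonneg (Real.exp_pos lam).le (hσ₀ i)
    · rw [← le_div_iff₀' hpos]
      refine hmin i hpos _ ?_
      convert (posSemidef_block_of_posSemidef_cqExt hσ.1.isHermitian h i).smul
        (inv_nonneg.2 hpos.le) using 1
      rw [smul_sub, smul_smul, smul_smul, inv_mul_cancel₀ hpos.ne', one_smul, div_eq_inv_mul]
  rw [Real.log_le_iff_le_exp hc]
  calc ∑ i, p i * t i ≤ ∑ i, Real.exp lam * (σ i i).re := Finset.sum_le_sum fun i _ => hblock i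
    _ = Real.exp lam := by rw [← Finset.mul_sum, hσ₁, mul_one]

end ClassicalExtensionBounds

/-- Cardinality bound for the max common information: any ensemble
decomposition of a bipartite density matrix can be replaced by one of size at
most `d_A² d_C² + 3` without increasing `I↑_max(AC:X)` of the classical
extension. -/
theorem cardinality_bound_max_common_information
    {A C : Type*} [Fintype A] [Fintype C]
    (ρ : Matrix (A × C) (A × C) ℂ) (hρ : IsDensity ρ)
    (n : ℕ) (p : Fin n → ℝ) (α : Fin n → Matrix A A ℂ) (γ : Fin n → Matrix C C ℂ)
    (hp : ∀ x, 0 ≤ p x) (hpsum : ∑ x, p x = 1)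
    (hα : ∀ x, IsDensity (α x)) (hγ : ∀ x, IsDensity (γ x))
    (hsum : ∑ x, p x • (α x ⊗ₖ γ x) = ρ) :
    ∃ (m : ℕ) (q : Fin m → ℝ) (β : Fin m → Matrix A A ℂ) (δ : Fin m → Matrix C C ℂ),
      m ≤ (Fintype.card A) ^ 2 * (Fintype.card C) ^ 2 + 3 ∧
      (∀ i, 0 ≤ q i) ∧ (∑ i, q i = 1) ∧
      (∀ i, IsDensity (β i)) ∧ (∀ i, IsDensity (δ i)) ∧
      (∑ i, q i • (β i ⊗ₖ δ i) = ρ) ∧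
      Iupmax (cqExt m q β δ) ≤ Iupmax (cqExt n p α γ) := by
  set M : Fin n → Matrix (A × C) (A × C) ℂ := fun x => α x ⊗ₖ γ x
  have hM : ∀ x, IsDensity (M x) := fun x => (hα x).kronecker (hγ x)
  set t : Fin n → ℝ := fun x => minScale ρ (M x)
  have hdom : ∀ x, 0 < p x → ∃ s : ℝ, (s • ρ - M x).PosSemidef := fun x hx =>
    ⟨_, hsum ▸ posSemidef_inv_smul_sub_of_sum hp (fun y => (hM y).1) hx⟩
  have ht : ∀ x, 0 < p x → 1 ≤ t x := fun x hx => one_le_minScale hρ.2 (hM x).2 (hdom x hx)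
  have hc : 1 ≤ ∑ x, p x * t x := hpsum ▸ Finset.sum_le_sum fun x _ => by
    rcases (hp x).eq_or_lt with h0 | hx
    · simp [← h0]
    · exact le_mul_of_one_le_right (hp x) (ht x hx)
  obtain ⟨m, q, g, hm, hq₀, hq₁, hg, hv⟩ :=
    exists_fin_convex_combination_eq_sum (fun x => (reAddIm (M x), t x)) hp hpsum
  have hρ' : ∑ j, q j • M (g j) = ρ := by
    refine IsHermitian.eq_of_reAddIm_eq ?_ hρ.1.isHermitian ?_
    · exact (posSemidef_sum _ fun j _ => (hM (g j)).1.smul (hq₀ j)).isHermitian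
    · simpa [← hsum, map_sum, Prod.fst_sum, M] using congrArg Prod.fst hv
  have hct : ∑ j, q j * t (g j) = ∑ x, p x * t x := by
    simpa [Prod.snd_sum] using congrArg Prod.snd hv
  refine ⟨m, q, α ∘ g, γ ∘ g, ?_, hq₀, hq₁, fun j => hα _, fun j => hγ _, hρ', ?_⟩
  · simp only [Module.finrank_prod, Module.finrank_matrix, Module.finrank_self,
      Fintype.card_prod] at hm
    nlinarith
  calc Iupmax (cqExt m q (α ∘ g) (γ ∘ g)) ≤ Real.log (∑ j, q j * t (g j)) :=
        Iupmax_cqExt_le_log hq₀ (fun j => zero_le_one.trans (ht _ (hg j))) (by linarith)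
          fun j => hρ' ▸ posSemidef_minScale_smul_sub hρ (hM _) (hdom _ (hg j))
    _ = Real.log (∑ x, p x * t x) := by rw [hct]
    _ ≤ Iupmax (cqExt n p α γ) :=
        log_le_Iupmax_cqExt hp (by linarith) fun x _ s hs => minScale_le hρ.2 (hM x).2 (hsum ▸ hs)
end

section
/- Expectation formula for I↑_max with a classical register: Let A, B be finite index types, X a finite nonempty type, p a strictly positive probability vector on X, and for each x ∈ X let ρ^x_{AB} be a density matrix on A ⊗ B. Set ρ_{ABX} := Σ_x p(x) · ρ^x_{AB} ⊗ E_xx (a matrix indexed by (A×B)×X) and ρ_A := Σ_x p(x) · Tr_B(ρ^x_{AB}). Then exp( I↑_max(A:BX)_ρ ) = Σ_x p(x) · exp( inf over density matrices τ_B on B of D_max( ρ^x_{AB} ‖ ρ_A ⊗ τ_B ) ), where I↑_max(A:BX)_ρ := inf over density matrices σ_{BX} on B ⊗ X of D_max( ρ_{ABX} ‖ ρ_A ⊗ σ_{BX} ). All the infima on both sides are finite real numbers. -/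
open Matrix
open scoped ComplexOrder Kronecker

open scoped MatrixOrder

/-!
Absorbing the normalisation of `σ`, an exponent `λ` is feasible for `inf_σ D_max(P ‖ R ⊗ σ)`
iff some `τ ≥ 0` with `Tr τ = e^λ` satisfies `P ≤ R ⊗ τ`. For the cq state, the diagonal blocks
`τ_x` of a feasible `τ` on `B ⊗ X` satisfy `p(x) ρ^x ≤ ρ_A ⊗ τ_x`, so `e^λ = Σ_x Tr τ_x` is at least
`Σ_x p(x) e^{I_x}`; conversely the block-diagonal `⊕_x p(x) τ_x` built from feasible `τ_x` is
feasible with `e^λ = Σ_x p(x) Tr τ_x`, which gives the reverse inequality up to any `ε > 0`.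
All the infima are finite: comparing traces shows `D_max ≥ 0` between states, and
`ρ^x ≤ |B| Tr_B ρ^x ⊗ 1 ≤ (|B| / p(x)) ρ_A ⊗ 1` by pinching, so every feasible set is nonempty.
-/

lemma sum_sum_sub_mul_mul_sub {R : Type*} [Ring R] {ι : Type*} [Fintype ι] (k : ι → R)
    (hk : ∑ i, k i = 1) (p : R) :
    ∑ i, ∑ j, (k i - k j) * p * (k i - k j) = 2 • (Fintype.card ι • ∑ i, k i * p * k i - p) := by
  have hkpk : ∑ i, ∑ j, k i * p * k j = p := by
    simp_rw [← Finset.mul_sum, ← Finset.sum_mul, hk, one_mul, mul_one]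
  have hkpk' : ∑ i, ∑ j, k j * p * k i = p := by rw [Finset.sum_comm, hkpk]
  simp only [sub_mul, mul_sub, Finset.sum_sub_distrib, hkpk, hkpk', Finset.sum_const,
    Finset.card_univ, ← Finset.smul_sum]
  abel

lemma exp_sInf_eq_sum_mul_exp_sInf {ι : Type*} [Fintype ι] [Nonempty ι] {p : ι → ℝ}
    (hp : ∀ i, 0 < p i) {S : Set ℝ} (hS : S.Nonempty) (hSbdd : BddBelow S) {T : ι → Set ℝ}
    (hT : ∀ i, (T i).Nonempty)
    (hlow : ∀ lam ∈ S, ∑ i, p i * Real.exp (sInf (T i)) ≤ Real.exp lam)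
    (hup : ∀ μ : ι → ℝ, (∀ i, μ i ∈ T i) → Real.log (∑ i, p i * Real.exp (μ i)) ∈ S) :
    Real.exp (sInf S) = ∑ i, p i * Real.exp (sInf (T i)) := by
  have hpos : ∀ μ : ι → ℝ, 0 < ∑ i, p i * Real.exp (μ i) := fun μ =>
    Finset.sum_pos (fun i _ => mul_pos (hp i) (Real.exp_pos _)) Finset.univ_nonempty
  set t := ∑ i, p i * Real.exp (sInf (T i))
  have ht : 0 < t := hpos _
  rw [← Real.exp_log ht, Real.exp_eq_exp]
  refine le_antisymm (le_of_forall_pos_lt_add fun ε hε => ?_)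
    (le_csInf hS fun lam hlam => (Real.log_le_iff_le_exp ht).mpr (hlow lam hlam))
  choose μ hμ hμlt using fun i => Real.lt_sInf_add_pos (hT i) hε
  have hsum : ∑ i, p i * Real.exp (μ i) < Real.exp ε * t := by
    rw [Finset.mul_sum]
    refine Finset.sum_lt_sum_of_nonempty Finset.univ_nonempty fun i _ => ?_
    rw [mul_left_comm, ← Real.exp_add]
    exact mul_lt_mul_of_pos_left (Real.exp_lt_exp.mpr (by linarith [hμlt i])) (hp i)
  calc sInf S ≤ Real.log (∑ i, p i * Real.exp (μ i)) := csInf_le hSbdd (hup μ hμ)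
    _ < Real.log (Real.exp ε * t) := Real.log_lt_log (hpos μ) hsum
    _ = Real.log t + ε := by rw [Real.log_mul (Real.exp_pos ε).ne' ht.ne', Real.log_exp]; ring

namespace Matrix

variable {m n : Type*}

lemma submatrix_le_submatrix {P Q : Matrix n n ℂ} (h : P ≤ Q) (e : m → n) :
    P.submatrix e e ≤ Q.submatrix e e :=
  (le_iff.mp h).submatrix e

variable [Fintype n]

lemma kronecker_le_kronecker_left [Fintype m] {R R' : Matrix m m ℂ} (h : R ≤ R')
    {τ : Matrix n n ℂ} (hτ : τ.PosSemidef) : R ⊗ₖ τ ≤ R' ⊗ₖ τ := by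
  have : R' ⊗ₖ τ - R ⊗ₖ τ = (R' - R) ⊗ₖ τ := by ext; simp [sub_mul]
  rw [le_iff, this]
  exact (le_iff.mp h).kronecker hτ

lemma trace_le_trace {P Q : Matrix n n ℂ} (h : P ≤ Q) : P.trace ≤ Q.trace := by
  simpa [trace_sub] using (le_iff.mp h).trace_nonneg

lemma posSemidef_blockDiagonal {ι : Type*} [Fintype ι] [DecidableEq ι]
    {P : ι → Matrix n n ℂ} (h : ∀ i, (P i).PosSemidef) : (blockDiagonal P).PosSemidef := by
  classical
  open scoped Matrix.Norms.L2Operator in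
  choose C hC using fun i => CStarAlgebra.nonneg_iff_eq_star_mul_self.mp (h i).nonneg
  have : blockDiagonal P = (blockDiagonal C)ᴴ * blockDiagonal C := by
    rw [blockDiagonal_conjTranspose, ← blockDiagonal_mul]
    exact congrArg _ (funext hC)
  rw [this]
  exact posSemidef_conjTranspose_mul_self _

lemma blockDiagonal_le_blockDiagonal {ι : Type*} [Fintype ι] [DecidableEq ι]
    {P Q : ι → Matrix n n ℂ} (h : ∀ i, P i ≤ Q i) : blockDiagonal P ≤ blockDiagonal Q := by
  rw [le_iff, ← blockDiagonal_sub]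
  exact posSemidef_blockDiagonal h

variable [DecidableEq n]

-- Pinching: the defect `card • ∑ K P K - P` is half of `∑ᵢ ∑ⱼ (Kᵢ - Kⱼ) P (Kᵢ - Kⱼ)`.
lemma le_card_smul_sum_mul_mul {ι : Type*} [Fintype ι] (K : ι → Matrix n n ℂ)
    (hK : ∀ i, (K i).IsHermitian) (hsum : ∑ i, K i = 1) {P : Matrix n n ℂ} (hP : P.PosSemidef) :
    P ≤ Fintype.card ι • ∑ i, K i * P * K i := by
  have hterm : (∑ i, ∑ j, (K i - K j) * P * (K i - K j)).PosSemidef := by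
    refine posSemidef_sum _ fun i _ => posSemidef_sum _ fun j _ => ?_
    simpa [((hK i).sub (hK j)).eq] using hP.mul_mul_conjTranspose_same (K i - K j)
  rw [sum_sum_sub_mul_mul_sub K hsum] at hterm
  have := hterm.smul (a := (2⁻¹ : ℝ)) (by norm_num)
  rwa [← Nat.cast_smul_eq_nsmul ℝ 2, smul_smul, Nat.cast_ofNat, inv_mul_cancel₀ two_ne_zero,
    one_smul] at this

end Matrix

section PartialTrace

variable {A B : Type*} [Fintype A] [Fintype B]

lemma posSemidef_ptraceSnd {ρ : Matrix (A × B) (A × B) ℂ}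
    (hρ : ρ.PosSemidef) : (ptraceSnd ρ).PosSemidef := by
  have : ptraceSnd ρ = ∑ b : B, ρ.submatrix (fun a => (a, b)) (fun a => (a, b)) := by
    ext a a'
    simp [ptraceSnd, Matrix.sum_apply]
  rw [this]
  exact posSemidef_sum _ fun b _ => hρ.submatrix _

lemma trace_ptraceSnd (ρ : Matrix (A × B) (A × B) ℂ) :
    (ptraceSnd ρ).trace = ρ.trace := by
  simp [ptraceSnd, trace, Fintype.sum_prod_type]

variable [DecidableEq A] [DecidableEq B]

lemma ptraceSnd_kronecker_one (P : Matrix (A × B) (A × B) ℂ) :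
    ptraceSnd P ⊗ₖ (1 : Matrix B B ℂ) = ∑ b, ∑ b',
      ((1 : Matrix A A ℂ) ⊗ₖ single b b' 1) * P * ((1 : Matrix A A ℂ) ⊗ₖ single b b' 1)ᴴ := by
  ext ⟨a, c⟩ ⟨a', c'⟩
  simp only [ptraceSnd, kroneckerMap_apply, of_apply, one_apply, mul_ite, mul_one, mul_zero,
    conjTranspose_kronecker, conjTranspose_one, conjTranspose_single, star_one, Matrix.sum_apply,
    Matrix.mul_apply, single_apply, ite_and, ite_mul, one_mul, zero_mul, Finset.sum_ite_irrel,
    Fintype.sum_prod_type, Finset.sum_ite_eq, Finset.mem_univ, ↓reduceIte, Finset.sum_const_zero,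
    Finset.sum_ite_eq']
  grind

-- `Tr_B P ⊗ 1 = Σ_{b,b'} E P Eᴴ` with `E = 1 ⊗ |b⟩⟨b'|`; its diagonal terms pinch `P`.
lemma le_card_smul_ptraceSnd_kronecker_one {P : Matrix (A × B) (A × B) ℂ} (hP : P.PosSemidef) :
    P ≤ Fintype.card B • (ptraceSnd P ⊗ₖ (1 : Matrix B B ℂ)) := by
  let E : B → B → Matrix (A × B) (A × B) ℂ := fun b b' => (1 : Matrix A A ℂ) ⊗ₖ single b b' 1
  have hE : ∀ b, (E b b).IsHermitian := fun b => by
    simp [E, IsHermitian, conjTranspose_kronecker]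
  have hsum : ∑ b, E b b = 1 := by
    ext ⟨a, c⟩ ⟨a', c'⟩
    simp only [Matrix.sum_apply, kroneckerMap_apply, one_apply, single_apply, ite_and, mul_ite,
      mul_one, mul_zero, Finset.sum_ite_eq', Finset.mem_univ, ↓reduceIte, Prod.mk.injEq, E]
    grind
  have hterm : ∀ b b', 0 ≤ E b b' * P * (E b b')ᴴ := fun b b' =>
    (hP.mul_mul_conjTranspose_same _).nonneg
  have hdiag : ∑ b, E b b * P * E b b ≤ ∑ b, ∑ b', E b b' * P * (E b b')ᴴ := by
    refine Finset.sum_le_sum fun b _ => ?_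
    have := Finset.single_le_sum (f := fun b' => E b b' * P * (E b b')ᴴ)
      (fun b' _ => hterm b b') (Finset.mem_univ b)
    rwa [(hE b).eq] at this
  calc P ≤ Fintype.card B • ∑ b, E b b * P * E b b :=
        le_card_smul_sum_mul_mul (fun b => E b b) hE hsum hP
    _ ≤ Fintype.card B • ∑ b, ∑ b', E b b' * P * (E b b')ᴴ := nsmul_le_nsmul_right hdiag _
    _ = Fintype.card B • (ptraceSnd P ⊗ₖ (1 : Matrix B B ℂ)) := by
      rw [ptraceSnd_kronecker_one]

end PartialTrace

section Dmax

variable {A S : Type*} [Fintype S]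

def dmaxFeasible (R : Matrix A A ℂ) (P : Matrix (A × S) (A × S) ℂ) : Set ℝ :=
  {lam | ∃ σ : Matrix S S ℂ, IsDensity σ ∧ (Real.exp lam • (R ⊗ₖ σ) - P).PosSemidef}

lemma sInf_Dmax_kronecker_eq [Fintype A] {R : Matrix A A ℂ} {P : Matrix (A × S) (A × S) ℂ}
    (hne : (dmaxFeasible R P).Nonempty) (hbdd : BddBelow (dmaxFeasible R P)) :
    sInf {z : EReal | ∃ σ : Matrix S S ℂ, IsDensity σ ∧ z = Dmax P (R ⊗ₖ σ)} =
      ((sInf (dmaxFeasible R P) : ℝ) : EReal) := by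
  apply le_antisymm
  · rw [Monotone.map_csInf_of_continuousAt continuous_coe_real_ereal.continuousAt
      EReal.coe_strictMono.monotone hne hbdd]
    refine le_sInf ?_
    rintro _ ⟨lam, ⟨σ, hσ, hlam⟩, rfl⟩
    refine sInf_le_of_le (b := Dmax P (R ⊗ₖ σ)) ⟨σ, hσ, rfl⟩ ?_
    exact sInf_le ⟨lam, rfl, hlam⟩
  · refine le_sInf ?_
    rintro _ ⟨σ, hσ, rfl⟩
    refine le_sInf ?_
    rintro _ ⟨lam, rfl, hlam⟩
    exact EReal.coe_le_coe_iff.mpr (csInf_le hbdd ⟨σ, hσ, hlam⟩)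

lemma mem_dmaxFeasible_iff {R : Matrix A A ℂ} {P : Matrix (A × S) (A × S) ℂ} {lam : ℝ} :
    lam ∈ dmaxFeasible R P ↔
      ∃ τ : Matrix S S ℂ, τ.PosSemidef ∧ τ.trace = Real.exp lam ∧ P ≤ R ⊗ₖ τ := by
  constructor
  · rintro ⟨σ, ⟨hσ, htr⟩, hle⟩
    refine ⟨Real.exp lam • σ, hσ.smul (Real.exp_pos lam).le, ?_, ?_⟩
    · simp [trace_smul, htr, Complex.real_smul]
    · rwa [kronecker_smul]
  · rintro ⟨τ, hτ, htr, hle⟩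
    refine ⟨(Real.exp lam)⁻¹ • τ, ⟨hτ.smul (inv_nonneg.mpr (Real.exp_pos lam).le), ?_⟩, ?_⟩
    · simp [trace_smul, htr, Complex.real_smul]
    · rwa [kronecker_smul, smul_smul, mul_inv_cancel₀ (Real.exp_pos lam).ne', one_smul]

variable [Fintype A] {R : Matrix A A ℂ} {P : Matrix (A × S) (A × S) ℂ}

lemma one_le_trace_of_le_kronecker (hR : R.trace = 1) (hP : P.trace = 1) {τ : Matrix S S ℂ}
    (h : P ≤ R ⊗ₖ τ) : 1 ≤ τ.trace := by
  simpa [trace_kronecker, hR, hP] using trace_le_trace h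

lemma log_trace_mem_dmaxFeasible (hR : R.trace = 1) (hP : P.trace = 1) {τ : Matrix S S ℂ}
    (hτ : τ.PosSemidef) (h : P ≤ R ⊗ₖ τ) : Real.log τ.trace.re ∈ dmaxFeasible R P := by
  obtain ⟨hre, him⟩ := Complex.le_def.mp (one_le_trace_of_le_kronecker hR hP h)
  refine mem_dmaxFeasible_iff.mpr ⟨τ, hτ, ?_, h⟩
  rw [Real.exp_log (zero_lt_one.trans_le (by simpa using hre))]
  exact Complex.ext rfl (by simpa using him.symm)

lemma exp_sInf_dmaxFeasible_le_trace (hR : R.trace = 1) (hP : P.trace = 1)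
    (hbdd : BddBelow (dmaxFeasible R P)) {τ : Matrix S S ℂ} (hτ : τ.PosSemidef)
    (h : P ≤ R ⊗ₖ τ) : Real.exp (sInf (dmaxFeasible R P)) ≤ τ.trace.re := by
  have hpos : 0 < τ.trace.re := zero_lt_one.trans_le
    (by simpa using (Complex.le_def.mp (one_le_trace_of_le_kronecker hR hP h)).1)
  rw [← Real.exp_log hpos]
  exact Real.exp_le_exp.mpr (csInf_le hbdd (log_trace_mem_dmaxFeasible hR hP hτ h))

lemma nonneg_of_mem_dmaxFeasible (hR : R.trace = 1) (hP : P.trace = 1) {lam : ℝ}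
    (h : lam ∈ dmaxFeasible R P) : 0 ≤ lam := by
  obtain ⟨τ, -, htr, hle⟩ := mem_dmaxFeasible_iff.mp h
  have := one_le_trace_of_le_kronecker hR hP hle
  rw [htr] at this
  exact Real.one_le_exp_iff.mp (by exact_mod_cast this)

lemma dmaxFeasible_nonempty [DecidableEq A] [DecidableEq S] (hR : R.trace = 1)
    (hP : P.trace = 1) (hPpsd : P.PosSemidef) {c : ℝ} (hc : 0 < c) (h : c • ptraceSnd P ≤ R) :
    (dmaxFeasible R P).Nonempty := by
  have hle : P ≤ R ⊗ₖ ((Fintype.card S / c : ℝ) • (1 : Matrix S S ℂ)) :=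
    calc P ≤ (Fintype.card S : ℝ) • (ptraceSnd P ⊗ₖ (1 : Matrix S S ℂ)) := by
          rw [Nat.cast_smul_eq_nsmul]
          exact le_card_smul_ptraceSnd_kronecker_one hPpsd
      _ = ((Fintype.card S / c : ℝ) • (c • ptraceSnd P)) ⊗ₖ (1 : Matrix S S ℂ) := by
          rw [smul_smul, div_mul_cancel₀ _ hc.ne', smul_kronecker]
      _ ≤ ((Fintype.card S / c : ℝ) • R) ⊗ₖ (1 : Matrix S S ℂ) :=
          kronecker_le_kronecker_left (smul_le_smul_of_nonneg_left h (by positivity))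
            PosSemidef.one
      _ = R ⊗ₖ ((Fintype.card S / c : ℝ) • (1 : Matrix S S ℂ)) := by
          rw [smul_kronecker, kronecker_smul]
  exact ⟨_, log_trace_mem_dmaxFeasible hR hP (PosSemidef.one.smul (by positivity)) hle⟩

end Dmax

section ClassicalQuantum

variable {A B X : Type*}

-- `Σ_x p(x) ρ^x ⊗ E_xx` is block diagonal in `x`; the register is then regrouped with `B`.
noncomputable def cqState [DecidableEq X] (p : X → ℝ) (ρ : X → Matrix (A × B) (A × B) ℂ) :
    Matrix (A × (B × X)) (A × (B × X)) ℂ :=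
  (blockDiagonal fun x => p x • ρ x).submatrix (Equiv.prodAssoc A B X).symm
    (Equiv.prodAssoc A B X).symm

lemma kronecker_blockDiagonal [DecidableEq X] (R : Matrix A A ℂ) (τ : X → Matrix B B ℂ) :
    R ⊗ₖ blockDiagonal τ = (blockDiagonal fun x => R ⊗ₖ τ x).submatrix
      (Equiv.prodAssoc A B X).symm (Equiv.prodAssoc A B X).symm := by
  ext ⟨a, b, x⟩ ⟨a', b', x'⟩
  by_cases hx : x = x' <;> simp [blockDiagonal_apply, hx]

variable [Fintype A] [Fintype B] [Fintype X]

noncomputable def cqMarginal (p : X → ℝ) (ρ : X → Matrix (A × B) (A × B) ℂ) : Matrix A A ℂ :=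
  ∑ x, p x • ptraceSnd (ρ x)

lemma trace_cqMarginal {p : X → ℝ} (hpsum : ∑ x, p x = 1) {ρ : X → Matrix (A × B) (A × B) ℂ}
    (hρ : ∀ x, (ρ x).trace = 1) : (cqMarginal p ρ).trace = 1 := by
  simp only [cqMarginal, trace_sum, trace_smul, trace_ptraceSnd, hρ, Complex.real_smul, mul_one]
  exact_mod_cast hpsum

lemma smul_ptraceSnd_le_cqMarginal {p : X → ℝ} (hp : ∀ x, 0 ≤ p x)
    {ρ : X → Matrix (A × B) (A × B) ℂ} (hρ : ∀ x, (ρ x).PosSemidef) (x : X) :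
    p x • ptraceSnd (ρ x) ≤ cqMarginal p ρ :=
  Finset.single_le_sum (f := fun y => p y • ptraceSnd (ρ y))
    (fun y _ => ((posSemidef_ptraceSnd (hρ y)).smul (hp y)).nonneg) (Finset.mem_univ x)

variable [DecidableEq X]

lemma trace_cqState {p : X → ℝ} (hpsum : ∑ x, p x = 1) {ρ : X → Matrix (A × B) (A × B) ℂ}
    (hρ : ∀ x, (ρ x).trace = 1) : (cqState p ρ).trace = 1 := by
  have hρ' : ∀ x, ∑ i, ρ x i i = 1 := hρ
  simp only [cqState, trace, diag_apply, submatrix_apply]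
  rw [Equiv.sum_comp (Equiv.prodAssoc A B X).symm fun j => blockDiagonal (fun x => p x • ρ x) j j,
    Fintype.sum_prod_type, Finset.sum_comm]
  simp only [blockDiagonal_apply_eq, Matrix.smul_apply, Complex.real_smul, ← Finset.mul_sum, hρ',
    mul_one]
  exact_mod_cast hpsum

lemma sum_mul_exp_sInf_dmaxFeasible_le {p : X → ℝ} (hp : ∀ x, 0 < p x)
    {ρ : X → Matrix (A × B) (A × B) ℂ} (hρ : ∀ x, (ρ x).trace = 1) {R : Matrix A A ℂ}
    (hR : R.trace = 1) (hbdd : ∀ x, BddBelow (dmaxFeasible R (ρ x))) {lam : ℝ}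
    (hlam : lam ∈ dmaxFeasible R (cqState p ρ)) :
    ∑ x, p x * Real.exp (sInf (dmaxFeasible R (ρ x))) ≤ Real.exp lam := by
  obtain ⟨σ, hσ, htr, hle⟩ := mem_dmaxFeasible_iff.mp hlam
  let τ : X → Matrix B B ℂ := fun x => σ.submatrix (fun b => (b, x)) (fun b => (b, x))
  have hblock : ∀ x, ρ x ≤ R ⊗ₖ ((p x)⁻¹ • τ x) := by
    intro x
    have hpx := submatrix_le_submatrix hle fun ab : A × B => (ab.1, (ab.2, x))
    have hcq : (cqState p ρ).submatrix (fun ab : A × B => (ab.1, (ab.2, x)))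
        (fun ab : A × B => (ab.1, (ab.2, x))) = p x • ρ x := by
      ext; simp [cqState]
    rw [hcq] at hpx
    calc ρ x = (p x)⁻¹ • (p x • ρ x) := by rw [smul_smul, inv_mul_cancel₀ (hp x).ne', one_smul]
      _ ≤ (p x)⁻¹ • (R ⊗ₖ τ x) := smul_le_smul_of_nonneg_left hpx (inv_nonneg.mpr (hp x).le)
      _ = R ⊗ₖ ((p x)⁻¹ • τ x) := (kronecker_smul _ _ _).symm
  have hx : ∀ x, p x * Real.exp (sInf (dmaxFeasible R (ρ x))) ≤ (τ x).trace.re := by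
    intro x
    have := exp_sInf_dmaxFeasible_le_trace hR (hρ x) (hbdd x)
      ((hσ.submatrix _).smul (inv_nonneg.mpr (hp x).le)) (hblock x)
    rw [trace_smul, Complex.real_smul, Complex.re_ofReal_mul] at this
    exact (le_inv_mul_iff₀ (hp x)).mp this
  calc ∑ x, p x * Real.exp (sInf (dmaxFeasible R (ρ x))) ≤ ∑ x, (τ x).trace.re :=
        Finset.sum_le_sum fun x _ => hx x
    _ = Real.exp lam := by
      rw [← Complex.re_sum, ← Complex.ofReal_re (Real.exp lam), ← htr, trace,
        Fintype.sum_prod_type, Finset.sum_comm]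
      rfl

lemma log_sum_mul_exp_mem_dmaxFeasible_cqState [Nonempty X] {p : X → ℝ} (hp : ∀ x, 0 < p x)
    {ρ : X → Matrix (A × B) (A × B) ℂ} {R : Matrix A A ℂ} {μ : X → ℝ}
    (hμ : ∀ x, μ x ∈ dmaxFeasible R (ρ x)) :
    Real.log (∑ x, p x * Real.exp (μ x)) ∈ dmaxFeasible R (cqState p ρ) := by
  choose τ hτ htr hle using fun x => mem_dmaxFeasible_iff.mp (hμ x)
  have hpos : 0 < ∑ x, p x * Real.exp (μ x) :=
    Finset.sum_pos (fun x _ => mul_pos (hp x) (Real.exp_pos _)) Finset.univ_nonempty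
  refine mem_dmaxFeasible_iff.mpr ⟨blockDiagonal fun x => p x • τ x,
    posSemidef_blockDiagonal fun x => (hτ x).smul (hp x).le, ?_, ?_⟩
  · simp [trace_blockDiagonal, trace_smul, htr, Real.exp_log hpos, Complex.real_smul]
  · rw [kronecker_blockDiagonal, cqState]
    refine submatrix_le_submatrix (blockDiagonal_le_blockDiagonal fun x => ?_) _
    rw [kronecker_smul]
    exact smul_le_smul_of_nonneg_left (hle x) (hp x).le

end ClassicalQuantum

/-- Expectation formula for `I↑_max` with a classical register:
`exp(I↑_max(A:BX)) = Σ_x p(x) exp(inf_τ D_max(ρ^x_AB ‖ ρ_A ⊗ τ_B))`,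
with all infima finite real numbers. -/
theorem iupmax_expectation_classical_register
    {A B : Type*} [Fintype A] [Fintype B]
    {X : Type*} [Fintype X] [DecidableEq X] [Nonempty X]
    (p : X → ℝ) (hp : ∀ x, 0 < p x) (hpsum : ∑ x, p x = 1)
    (ρAB : X → Matrix (A × B) (A × B) ℂ) (hρ : ∀ x, IsDensity (ρAB x)) :
    -- the classical–quantum state `ρ_{ABX} = Σ_x p(x) ρ^x_{AB} ⊗ E_xx`,
    -- indexed so that the first system is `A` and the second is `B × X`
    let ρABX : Matrix (A × (B × X)) (A × (B × X)) ℂ :=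
      Matrix.of fun r c =>
        if r.2.2 = c.2.2 then (p r.2.2 : ℂ) * ρAB r.2.2 (r.1, r.2.1) (c.1, c.2.1) else 0
    let ρA : Matrix A A ℂ := ∑ x, p x • ptraceSnd (ρAB x)
    -- `I↑_max(A:BX)`
    let L : EReal := sInf {z : EReal | ∃ σ : Matrix (B × X) (B × X) ℂ,
      IsDensity σ ∧ z = Dmax ρABX (ρA ⊗ₖ σ)}
    -- the conditional quantities `inf_τ D_max(ρ^x_AB ‖ ρ_A ⊗ τ_B)`
    let I : X → EReal := fun x => sInf {z : EReal | ∃ τ : Matrix B B ℂ,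
      IsDensity τ ∧ z = Dmax (ρAB x) (ρA ⊗ₖ τ)}
    L ≠ ⊤ ∧ L ≠ ⊥ ∧ (∀ x, I x ≠ ⊤ ∧ I x ≠ ⊥) ∧
      Real.exp L.toReal = ∑ x, p x * Real.exp (I x).toReal := by
  classical
  intro ρABX ρA L I
  have hcq : ρABX = cqState p ρAB := by
    ext ⟨a, b, x⟩ ⟨a', b', x'⟩
    by_cases hx : x = x' <;> simp [ρABX, cqState, blockDiagonal_apply, hx, Complex.real_smul]
  have hρA : ρA.trace = 1 := trace_cqMarginal hpsum fun x => (hρ x).2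
  have hI_ne : ∀ x, (dmaxFeasible ρA (ρAB x)).Nonempty := fun x =>
    dmaxFeasible_nonempty hρA (hρ x).2 (hρ x).1 (hp x)
      (smul_ptraceSnd_le_cqMarginal (fun y => (hp y).le) (fun y => (hρ y).1) x)
  have hI_bdd : ∀ x, BddBelow (dmaxFeasible ρA (ρAB x)) := fun x =>
    ⟨0, fun _ => nonneg_of_mem_dmaxFeasible hρA (hρ x).2⟩
  have hL_ne : (dmaxFeasible ρA (cqState p ρAB)).Nonempty :=
    ⟨_, log_sum_mul_exp_mem_dmaxFeasible_cqState hp fun x => (hI_ne x).some_mem⟩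
  have hL_bdd : BddBelow (dmaxFeasible ρA (cqState p ρAB)) :=
    ⟨0, fun _ => nonneg_of_mem_dmaxFeasible hρA (trace_cqState hpsum fun x => (hρ x).2)⟩
  have hL : L = ((sInf (dmaxFeasible ρA (cqState p ρAB)) : ℝ) : EReal) := by
    simp only [L, hcq]
    exact sInf_Dmax_kronecker_eq hL_ne hL_bdd
  have hI : ∀ x, I x = ((sInf (dmaxFeasible ρA (ρAB x)) : ℝ) : EReal) := fun x =>
    sInf_Dmax_kronecker_eq (hI_ne x) (hI_bdd x)
  refine ⟨by simp [hL], by simp [hL], fun x => by simp [hI x], ?_⟩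
  simp only [hL, hI, EReal.toReal_coe]
  exact exp_sInf_eq_sum_mul_exp_sInf hp hL_ne hL_bdd hI_ne
    (fun _ => sum_mul_exp_sInf_dmaxFeasible_le hp (fun x => (hρ x).2) hρA hI_bdd)
    (fun _ => log_sum_mul_exp_mem_dmaxFeasible_cqState hp)
end

section
/- Evaluation of I↓_max on classical–quantum states: Let A be a finite index type, X a finite nonempty type, p a strictly positive probability vector on X, and for each x ∈ X let ρ_x be a density matrix on A. Set ρ_{AX} := Σ_x p(x) · ρ_x ⊗ E_xx. Then, in the extended reals, the infimum over density matrices τ_A on A and density matrices σ_X on X of D_max( ρ_{AX} ‖ τ_A ⊗ σ_X ) equals the infimum over density matrices τ_A on A and strictly positive probability vectors q on X of sup over x ∈ X of [ ln( p(x)/q(x) ) + D_max( ρ_x ‖ τ_A ) ]. (In particular, in the first infimum the second tensor factor may without loss of generality be restricted to diagonal, i.e. classical, states.) -/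
open Matrix
open scoped ComplexOrder Kronecker

/-! Write `ρ_AX` as the block-diagonal matrix `⊕ₓ p(x) ρₓ`. Compressing
`e^λ (τ ⊗ σ) - ρ_AX ≥ 0` to its diagonal blocks shows that pinching `σ` to its diagonal can only
decrease `D_max(ρ_AX ‖ τ ⊗ σ)`, and for block-diagonal arguments the blocks decouple:
`D_max(⊕ₓ Pₓ ‖ ⊕ₓ Qₓ) = supₓ D_max(Pₓ ‖ Qₓ)`. The scaling rule
`D_max(a P ‖ b Q) = ln (a / b) + D_max(P ‖ Q)` turns the blocks `p(x) ρₓ`, `σ_xx τ` into the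
terms on the right. A vanishing `σ_xx` makes `D_max` infinite, because `-p(x) ρₓ` has negative
trace. -/

namespace Matrix

variable {𝕜 α m o : Type*} [RCLike 𝕜]

theorem blockDiag_kronecker [CommMagma α] (A : Matrix m m α) (B : Matrix o o α) (k : o) :
    blockDiag (A ⊗ₖ B) k = B k k • A := by
  ext i j
  simp [blockDiag_apply, mul_comm]

theorem posSemidef_real_smul_iff {M : Matrix m m 𝕜} {c : ℝ} (hc : 0 < c) :
    (c • M).PosSemidef ↔ M.PosSemidef := by
  refine ⟨fun h => ?_, fun h => h.smul hc.le⟩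
  simpa [smul_smul, inv_mul_cancel₀ hc.ne'] using h.smul (inv_pos.2 hc).le

theorem PosSemidef.blockDiag {M : Matrix (m × o) (m × o) 𝕜} (hM : M.PosSemidef) (k : o) :
    (blockDiag M k).PosSemidef :=
  hM.submatrix (·, k)

variable [Fintype o] [DecidableEq o]

theorem sum_kronecker_single_one [NonAssocSemiring α] (M : o → Matrix m m α) :
    ∑ k, M k ⊗ₖ single k k (1 : α) = blockDiagonal M := by
  ext ⟨i, k⟩ ⟨j, k'⟩
  simp [Matrix.sum_apply, blockDiagonal_apply', single_apply, ite_and]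

variable [Fintype m]

theorem posSemidef_blockDiagonal_iff {M : o → Matrix m m 𝕜} :
    (blockDiagonal M).PosSemidef ↔ ∀ k, (M k).PosSemidef := by
  refine ⟨fun h k => by simpa using h.blockDiag k, fun h => ?_⟩
  rw [← sum_kronecker_single_one]
  refine posSemidef_sum _ fun k _ => (h k).kronecker ?_
  rw [← diagonal_single]
  exact .diagonal (Pi.single_nonneg.2 zero_le_one)

end Matrix

section Dmax

variable {n : Type*} {P Q : Matrix n n ℂ}

theorem posSemidef_exp_smul_sub_mono (hQ : Q.PosSemidef) {lam mu : ℝ}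
    (h : (Real.exp lam • Q - P).PosSemidef) (hle : lam ≤ mu) :
    (Real.exp mu • Q - P).PosSemidef := by
  have hsplit :
      Real.exp mu • Q - P = (Real.exp lam • Q - P) + (Real.exp mu - Real.exp lam) • Q := by
    rw [sub_smul]; abel
  rw [hsplit]
  exact h.add (hQ.smul (sub_nonneg.2 (Real.exp_le_exp.2 hle)))

variable [Fintype n]

theorem Dmax_le_iff (hQ : Q.PosSemidef) {t : EReal} :
    Dmax P Q ≤ t ↔ ∀ lam : ℝ, t < lam → (Real.exp lam • Q - P).PosSemidef := by
  refine ⟨fun h lam hlam => ?_,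
    fun h => EReal.le_of_forall_lt_iff_le.1 fun lam hlam => sInf_le ⟨lam, rfl, h lam hlam⟩⟩
  obtain ⟨_, ⟨mu, rfl, hmu⟩, hlt⟩ := sInf_lt_iff.1 (h.trans_lt hlam)
  exact posSemidef_exp_smul_sub_mono hQ hmu (EReal.coe_lt_coe_iff.1 hlt).le

theorem Dmax_smul_smul (hQ : Q.PosSemidef) {a b : ℝ} (ha : 0 < a) (hb : 0 < b) :
    Dmax (a • P) (b • Q) = Real.log (a / b) + Dmax P Q := by
  set c := Real.log (a / b)
  have hscale (lam : ℝ) :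
      Real.exp lam • (b • Q) - a • P = a • (Real.exp (lam - c) • Q - P) := by
    rw [smul_sub, smul_smul, smul_smul, Real.exp_sub, Real.exp_log (div_pos ha hb)]
    congr 2
    field_simp
  refine eq_of_forall_ge_iff fun t => ?_
  rw [Dmax_le_iff (hQ.smul hb.le), add_comm,
    ← EReal.le_sub_iff_add_le (.inl (EReal.coe_ne_bot c)) (.inl (EReal.coe_ne_top c)),
    Dmax_le_iff hQ]
  simp_rw [hscale, posSemidef_real_smul_iff ha]
  have hshift : ∀ mu : ℝ, t - c < mu ↔ t < ((mu + c : ℝ) : EReal) := fun mu => by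
    rw [EReal.coe_add]
    exact EReal.sub_lt_iff (.inl (EReal.coe_ne_bot c)) (.inl (EReal.coe_ne_top c))
  exact ⟨fun h mu hmu => by simpa using h (mu + c) ((hshift mu).1 hmu),
    fun h lam hlam => h (lam - c) ((hshift _).2 (by simpa using hlam))⟩

theorem Dmax_zero_right_eq_top (hP : 0 < P.trace) : Dmax P 0 = ⊤ := by
  refine sInf_eq_top.2 fun _ ⟨lam, _, h⟩ => absurd h.trace_nonneg fun h' => hP.not_ge ?_
  simpa [trace_neg] using h'

variable {m o : Type*} [Fintype m] [Fintype o] [DecidableEq o]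

theorem Dmax_blockDiagonal {P Q : o → Matrix m m ℂ} (hQ : ∀ k, (Q k).PosSemidef) :
    Dmax (blockDiagonal P) (blockDiagonal Q) = ⨆ k, Dmax (P k) (Q k) := by
  refine eq_of_forall_ge_iff fun t => ?_
  simp_rw [iSup_le_iff, Dmax_le_iff (posSemidef_blockDiagonal_iff.2 hQ), Dmax_le_iff (hQ _),
    ← blockDiagonal_smul, ← blockDiagonal_sub, posSemidef_blockDiagonal_iff, Pi.sub_apply,
    Pi.smul_apply]
  exact ⟨fun h k lam hlam => h lam hlam k, fun h lam hlam k => h k lam hlam⟩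

theorem iSup_Dmax_blockDiag_le (P : o → Matrix m m ℂ) (Q : Matrix (m × o) (m × o) ℂ) :
    ⨆ k, Dmax (P k) (blockDiag Q k) ≤ Dmax (blockDiagonal P) Q :=
  le_sInf fun _ ⟨lam, hz, h⟩ => hz ▸ iSup_le fun k => sInf_le ⟨lam, rfl, by
    simpa [blockDiag_sub, blockDiag_smul, blockDiag_blockDiagonal] using h.blockDiag k⟩

end Dmax

section IsDensity

variable {n : Type*} [Fintype n]

theorem isDensity_diagonal_ofReal [DecidableEq n] {q : n → ℝ} (hq : ∀ i, 0 ≤ q i)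
    (hsum : ∑ i, q i = 1) : IsDensity (diagonal fun i => (q i : ℂ)) :=
  ⟨.diagonal fun i => Complex.zero_le_real.2 (hq i), by
    simp [trace_diagonal, ← Complex.ofReal_sum, hsum]⟩

theorem IsDensity.sum_re_diag {σ : Matrix n n ℂ} (hσ : IsDensity σ) :
    ∑ i, (σ i i).re = 1 := by
  simpa [trace, Complex.re_sum] using congrArg Complex.re hσ.2

theorem IsDensity.trace_real_smul_pos {ρ : Matrix n n ℂ} (hρ : IsDensity ρ) {c : ℝ}
    (hc : 0 < c) : 0 < (c • ρ).trace := by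
  simpa [trace_smul, hρ.2] using hc

end IsDensity

section ClassicalQuantum

variable {m o : Type*} [Fintype m] [Fintype o] [DecidableEq o] {P : o → Matrix m m ℂ}
  {τ : Matrix m m ℂ}

theorem Dmax_blockDiagonal_smul_kronecker_diagonal (hτ : τ.PosSemidef) {a b : o → ℝ}
    (ha : ∀ k, 0 < a k) (hb : ∀ k, 0 < b k) :
    Dmax (blockDiagonal fun k => a k • P k) (τ ⊗ₖ diagonal fun k => (b k : ℂ))
      = ⨆ k, (Real.log (a k / b k) : EReal) + Dmax (P k) τ := by
  simp only [kronecker_diagonal, op_smul_eq_smul, Complex.coe_smul]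
  rw [Dmax_blockDiagonal fun k => hτ.smul (hb k).le]
  simp_rw [Dmax_smul_smul hτ (ha _) (hb _)]

theorem Dmax_kronecker_diagonal_diag_le (hτ : τ.PosSemidef) {σ : Matrix o o ℂ}
    (hσ : σ.PosSemidef) :
    Dmax (blockDiagonal P) (τ ⊗ₖ diagonal σ.diag)
      ≤ Dmax (blockDiagonal P) (τ ⊗ₖ σ) := by
  simp only [kronecker_diagonal, op_smul_eq_smul, diag_apply]
  rw [Dmax_blockDiagonal fun k => hτ.smul hσ.diag_nonneg]
  simpa [blockDiag_kronecker] using iSup_Dmax_blockDiag_le P (τ ⊗ₖ σ)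

theorem Dmax_blockDiagonal_kronecker_eq_top {σ : Matrix o o ℂ} {k : o} (hσ : σ k k = 0)
    (hP : 0 < (P k).trace) : Dmax (blockDiagonal P) (τ ⊗ₖ σ) = ⊤ := by
  refine top_le_iff.1 ((le_iSup_of_le k ?_).trans (iSup_Dmax_blockDiag_le P (τ ⊗ₖ σ)))
  rw [blockDiag_kronecker, hσ, zero_smul, Dmax_zero_right_eq_top hP]

end ClassicalQuantum

theorem idownmax_cq_eval_general
    {A : Type*} [Fintype A] {X : Type*} [Fintype X] [DecidableEq X]
    (p : X → ℝ) (hp : ∀ x, 0 < p x)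
    (ρ : X → Matrix A A ℂ) (hρ : ∀ x, IsDensity (ρ x)) :
    let ρAX : Matrix (A × X) (A × X) ℂ :=
      ∑ x, p x • (ρ x ⊗ₖ Matrix.single x x (1 : ℂ))
    sInf {z : EReal | ∃ (τ : Matrix A A ℂ) (σ : Matrix X X ℂ),
        IsDensity τ ∧ IsDensity σ ∧ z = Dmax ρAX (τ ⊗ₖ σ)}
      = sInf {z : EReal | ∃ (τ : Matrix A A ℂ) (q : X → ℝ),
        IsDensity τ ∧ (∀ x, 0 < q x) ∧ (∑ x, q x = 1) ∧
        z = ⨆ x, ((Real.log (p x / q x) : EReal) + Dmax (ρ x) τ)} := by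
  intro ρAX
  have hρAX : ρAX = blockDiagonal fun x => p x • ρ x := by
    simp_rw [ρAX, ← smul_kronecker, sum_kronecker_single_one]
  rw [hρAX]
  refine le_antisymm (le_sInf ?_) (le_sInf ?_)
  · rintro _ ⟨τ, q, hτ, hq, hqsum, rfl⟩
    refine sInf_le ⟨τ, diagonal fun x => (q x : ℂ), hτ,
      isDensity_diagonal_ofReal (fun x => (hq x).le) hqsum, ?_⟩
    rw [Dmax_blockDiagonal_smul_kronecker_diagonal hτ.1 hp hq]
  · rintro _ ⟨τ, σ, hτ, hσ, rfl⟩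
    have hσ_real (x : X) : σ x x = (σ x x).re := Complex.eq_re_of_ofReal_le hσ.1.diag_nonneg
    by_cases hq : ∀ x, 0 < (σ x x).re
    · refine sInf_le_of_le ⟨τ, fun x => (σ x x).re, hτ, hq, hσ.sum_re_diag, rfl⟩ ?_
      rw [← Dmax_blockDiagonal_smul_kronecker_diagonal hτ.1 hp hq, ← funext hσ_real]
      exact Dmax_kronecker_diagonal_diag_le hτ.1 hσ.1
    · push Not at hq
      obtain ⟨x, hx⟩ := hq
      have hσx : σ x x = 0 := by
        rw [hσ_real, hx.antisymm (Complex.nonneg_iff.1 hσ.1.diag_nonneg).1, Complex.ofReal_zero]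
      rw [Dmax_blockDiagonal_kronecker_eq_top hσx ((hρ x).trace_real_smul_pos (hp x))]
      exact le_top

/-- Evaluation of `I↓_max` on classical–quantum states:
`inf_{τ_A, σ_X} D_max(ρ_AX ‖ τ_A ⊗ σ_X)
  = inf_{τ_A, q > 0} sup_x [ ln(p(x)/q(x)) + D_max(ρ_x ‖ τ_A) ]`. -/
theorem idownmax_cq_eval
    {A : Type*} [Fintype A] {X : Type*} [Fintype X] [DecidableEq X] [Nonempty X]
    (p : X → ℝ) (hp : ∀ x, 0 < p x) (hpsum : ∑ x, p x = 1)
    (ρ : X → Matrix A A ℂ) (hρ : ∀ x, IsDensity (ρ x)) :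
    let ρAX : Matrix (A × X) (A × X) ℂ :=
      ∑ x, p x • (ρ x ⊗ₖ Matrix.single x x (1 : ℂ))
    sInf {z : EReal | ∃ (τ : Matrix A A ℂ) (σ : Matrix X X ℂ),
        IsDensity τ ∧ IsDensity σ ∧ z = Dmax ρAX (τ ⊗ₖ σ)}
      = sInf {z : EReal | ∃ (τ : Matrix A A ℂ) (q : X → ℝ),
        IsDensity τ ∧ (∀ x, 0 < q x) ∧ (∑ x, q x = 1) ∧
        z = ⨆ x, ((Real.log (p x / q x) : EReal) + Dmax (ρ x) τ)} :=
  idownmax_cq_eval_general p hp ρ hρ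
end

section
/- Pinching can only decrease D_max against classical–quantum states: Let A be a finite index type, X a finite nonempty type, p a probability vector on X, and for each x ∈ X let ρ_x be a density matrix on A; set ρ_{AX} := Σ_x p(x) · ρ_x ⊗ E_xx. For any positive semidefinite τ_A on A and any density matrix σ_X on X, let Δ(σ_X) denote the diagonal matrix with the same diagonal entries as σ_X. Then D_max( ρ_{AX} ‖ τ_A ⊗ Δ(σ_X) ) ≤ D_max( ρ_{AX} ‖ τ_A ⊗ σ_X ) in the extended reals. -/
open Matrix
open scoped ComplexOrder Kronecker

/-!
The pinching `M ↦ ∑ₓ (1 ⊗ Eₓₓ) M (1 ⊗ Eₓₓ)` in the classical register is a positive linear map.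
It fixes the block-diagonal state `ρ_AX` and sends `τ ⊗ σ` to `τ ⊗ Δ(σ)`, so it maps every
witness `e^λ (τ ⊗ σ) - ρ_AX ≥ 0` to a witness `e^λ (τ ⊗ Δ(σ)) - ρ_AX ≥ 0`.
-/

namespace Matrix

variable {n X R : Type*} [DecidableEq X]

/-- With `f = Prod.snd` this is the pinching of the second tensor factor. -/
def pinching [Zero R] (f : n → X) (M : Matrix n n R) : Matrix n n R :=
  of fun i j => if f i = f j then M i j else 0

theorem pinching_apply [Zero R] (f : n → X) (M : Matrix n n R) (i j : n) :
    pinching f M i j = if f i = f j then M i j else 0 := rfl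

theorem pinching_eq_self [Zero R] {f : n → X} {M : Matrix n n R}
    (h : ∀ i j, f i ≠ f j → M i j = 0) : pinching f M = M := by
  ext i j
  by_cases hij : f i = f j <;> simp [pinching_apply, hij, h i j]

theorem pinching_sub [AddGroup R] (f : n → X) (M N : Matrix n n R) :
    pinching f (M - N) = pinching f M - pinching f N := by
  ext i j
  by_cases hij : f i = f j <;> simp [pinching_apply, hij]

theorem pinching_smul {S : Type*} [Zero R] [SMulZeroClass S R] (f : n → X) (c : S)
    (M : Matrix n n R) : pinching f (c • M) = c • pinching f M := by
  ext i j
  by_cases hij : f i = f j <;> simp [pinching_apply, hij]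

theorem pinching_snd_kronecker [MulZeroClass R] {A : Type*} (S : Matrix A A R)
    (T : Matrix X X R) :
    pinching Prod.snd (S ⊗ₖ T) = S ⊗ₖ diagonal fun x => T x x := by
  ext ⟨a, x⟩ ⟨b, y⟩
  by_cases hxy : x = y <;> simp [pinching_apply, hxy]

variable [Fintype X]

theorem pinching_eq_sum [Semiring R] [Fintype n] [DecidableEq n] (f : n → X) (M : Matrix n n R) :
    pinching f M = ∑ x, diagonal (fun i => if f i = x then 1 else 0) * M *
      diagonal (fun i => if f i = x then 1 else 0) := by
  ext i j
  by_cases hij : f i = f j <;> simp [pinching_apply, hij, sum_apply, diagonal_mul, mul_diagonal]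

theorem PosSemidef.pinching [Ring R] [PartialOrder R] [StarRing R] [AddLeftMono R] [Fintype n]
    {M : Matrix n n R} (hM : M.PosSemidef) (f : n → X) :
    (M.pinching f).PosSemidef := by
  classical
  rw [pinching_eq_sum]
  refine posSemidef_sum _ fun x _ => ?_
  simpa [Pi.star_def, apply_ite star] using
    hM.conjTranspose_mul_mul_same (diagonal fun i => if f i = x then (1 : R) else 0)

end Matrix

theorem Dmax_le_Dmax_of_posSemidef_imp {n : Type*} [Fintype n] {P Q Q' : Matrix n n ℂ}
    (h : ∀ c : ℝ, (Real.exp c • Q - P).PosSemidef → (Real.exp c • Q' - P).PosSemidef) :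
    Dmax P Q' ≤ Dmax P Q :=
  sInf_le_sInf fun _ ⟨c, hx, hc⟩ => ⟨c, hx, h c hc⟩

theorem Dmax_pinching_le {n X : Type*} [Fintype n] [Fintype X] [DecidableEq X] (f : n → X)
    {P : Matrix n n ℂ} (hP : P.pinching f = P) (Q : Matrix n n ℂ) :
    Dmax P (Q.pinching f) ≤ Dmax P Q :=
  Dmax_le_Dmax_of_posSemidef_imp fun c hc => by
    simpa only [pinching_sub, pinching_smul, hP] using hc.pinching f

theorem dmax_pinching_cq_general
    {A : Type*} [Fintype A] {X : Type*} [Fintype X] [DecidableEq X]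
    (p : X → ℝ) (ρ : X → Matrix A A ℂ) (τ : Matrix A A ℂ) (σ : Matrix X X ℂ) :
    let ρAX : Matrix (A × X) (A × X) ℂ :=
      ∑ x, p x • (ρ x ⊗ₖ Matrix.single x x (1 : ℂ))
    Dmax ρAX (τ ⊗ₖ Matrix.diagonal (fun x => σ x x)) ≤ Dmax ρAX (τ ⊗ₖ σ) := by
  intro ρAX
  have hρAX : ρAX.pinching Prod.snd = ρAX := pinching_eq_self fun i j hij => by
    refine (Matrix.sum_apply i j _ _).trans (Finset.sum_eq_zero fun x _ => ?_)
    have hsingle : single x x (1 : ℂ) i.2 j.2 = 0 :=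
      single_apply_of_ne _ _ _ _ _ fun h => hij (h.1.symm.trans h.2)
    simp [hsingle]
  rw [← pinching_snd_kronecker]
  exact Dmax_pinching_le Prod.snd hρAX (τ ⊗ₖ σ)

/-- Pinching the second argument to its diagonal can only decrease `D_max`
against a classical–quantum state. -/
theorem dmax_pinching_cq
    {A : Type*} [Fintype A] {X : Type*} [Fintype X] [DecidableEq X] [Nonempty X]
    (p : X → ℝ) (hp : ∀ x, 0 ≤ p x) (hpsum : ∑ x, p x = 1)
    (ρ : X → Matrix A A ℂ) (hρ : ∀ x, IsDensity (ρ x))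
    (τ : Matrix A A ℂ) (hτ : τ.PosSemidef)
    (σ : Matrix X X ℂ) (hσ : IsDensity σ) :
    let ρAX : Matrix (A × X) (A × X) ℂ :=
      ∑ x, p x • (ρ x ⊗ₖ Matrix.single x x (1 : ℂ))
    Dmax ρAX (τ ⊗ₖ Matrix.diagonal (fun x => σ x x)) ≤ Dmax ρAX (τ ⊗ₖ σ) :=
  dmax_pinching_cq_general p ρ τ σ
end

section
/- Max common information of perfectly correlated classical randomness: Let X be a finite nonempty set and p a strictly positive probability vector on X, and let χ be the distribution on X × X given by χ(x,x') = p(x) if x = x' and 0 otherwise. Call a classical Markov-chain extension of χ a tuple (Y, r, a, b) where Y is a finite nonempty set, r is a probability vector on Y, and a, b : Y → (X → ℝ) are families of probability vectors on X, such that for all x, x' ∈ X: Σ_y r(y)·a(y)(x)·b(y)(x') = χ(x,x'). For such an extension define P(x,x',y) := r(y)·a(y)(x)·b(y)(x') and I↑_max := inf over probability vectors q on Y of D_max^{cl}( P ‖ (x,x',y) ↦ χ(x,x')·q(y) ). Then: (i) for every classical Markov-chain extension of χ, I↑_max ≥ ln |X|; and (ii) there exists a classical Markov-chain extension of χ (namely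 Y = X, r = p, with a and b the deterministic copy kernels) whose I↑_max equals ln |X|. Hence the minimum of I↑_max over all classical Markov-chain extensions of χ equals ln |X|. -/
/-- Classical max-relative entropy of nonnegative vectors `u`, `v` on a finite
set: `inf { λ : ∀ i, u i ≤ e^λ v i }`, with value `+∞` if no such `λ` exists. -/
noncomputable def DmaxCl {ι : Type*} [Fintype ι] (u v : ι → ℝ) : EReal :=
  sInf {x : EReal | ∃ lam : ℝ, x = (lam : EReal) ∧ ∀ i, u i ≤ Real.exp lam * v i}

/-- For a classical Markov-chain extension `(Y, r, a, b)` of the perfectly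
correlated distribution `χ` induced by `p`, the quantity
`I↑_max = inf_q D_max^cl( P ‖ (x,x',y) ↦ χ(x,x') q(y) )`, where
`P(x,x',y) = r(y) a(y)(x) b(y)(x')`. -/
noncomputable def IupmaxCl {X Y : Type*} [Fintype X] [Fintype Y] [DecidableEq X]
    (p : X → ℝ) (r : Y → ℝ) (a b : Y → X → ℝ) : EReal :=
  sInf {z : EReal | ∃ q : Y → ℝ, (∀ y, 0 ≤ q y) ∧ (∑ y, q y = 1) ∧
    z = DmaxCl (fun t : X × X × Y => r t.2.2 * a t.2.2 t.1 * b t.2.2 t.2.1)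
               (fun t : X × X × Y => (if t.1 = t.2.1 then p t.1 else 0) * q t.2.2)}

lemma key_lb {X : Type*} [Fintype X] [DecidableEq X] [Nonempty X]
    (p : X → ℝ) (hp : ∀ x, 0 < p x)
    {Y : Type*} [Fintype Y]
    (r : Y → ℝ) (a b : Y → X → ℝ)
    (hr : ∀ y, 0 ≤ r y)
    (ha : ∀ y x, 0 ≤ a y x) (ha1 : ∀ y, ∑ x, a y x = 1)
    (hb : ∀ y x, 0 ≤ b y x) (hb1 : ∀ y, ∑ x, b y x = 1)
    (hmarg : ∀ x x', ∑ y, r y * a y x * b y x' = (if x = x' then p x else 0)) :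
    (Real.log (Fintype.card X) : EReal) ≤ IupmaxCl p r a b := by
  have hcard : (0:ℝ) < Fintype.card X := by
    exact_mod_cast Fintype.card_pos
  apply le_sInf
  rintro z ⟨q, hq0, hq1, rfl⟩
  apply le_sInf
  rintro w ⟨lam, rfl, hlam⟩
  rw [EReal.coe_le_coe_iff]
  -- per-y bound
  have perY : ∀ y, ∑ x, r y * a y x * b y x / p x ≤ Real.exp lam * q y := by
    intro y
    rcases eq_or_lt_of_le (hr y) with hy | hy
    · have h0 : ∀ x ∈ Finset.univ, r y * a y x * b y x / p x = 0 := by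
        intro x _; rw [← hy]; ring
      rw [Finset.sum_eq_zero h0]
      exact mul_nonneg (Real.exp_pos lam).le (hq0 y)
    · -- off-diagonal vanishing
      have hoff : ∀ x x', x ≠ x' → a y x * b y x' = 0 := by
        intro x x' hne
        have hs : ∑ y', r y' * a y' x * b y' x' = 0 := by
          rw [hmarg x x', if_neg hne]
        have hnn : ∀ y' ∈ Finset.univ, 0 ≤ r y' * a y' x * b y' x' := by
          intro y' _; exact mul_nonneg (mul_nonneg (hr y') (ha y' x)) (hb y' x')
        have := (Finset.sum_eq_zero_iff_of_nonneg hnn).mp hs y (Finset.mem_univ y)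
        have h2 : r y * (a y x * b y x') = 0 := by linarith [this]
        rcases mul_eq_zero.mp h2 with h | h
        · exact absurd h (ne_of_gt hy)
        · exact h
      obtain ⟨x₀, hx₀⟩ : ∃ x, 0 < a y x := by
        by_contra h
        push_neg at h
        have : ∑ x, a y x ≤ 0 := Finset.sum_nonpos (fun x _ => h x)
        rw [ha1 y] at this; linarith
      have hbz : ∀ x', x' ≠ x₀ → b y x' = 0 := by
        intro x' hne
        have := hoff x₀ x' (fun h => hne h.symm)
        rcases mul_eq_zero.mp this with h | h
        · exact absurd h (ne_of_gt hx₀)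
        · exact h
      have hbx₀ : b y x₀ = 1 := by
        have := hb1 y
        rwa [Finset.sum_eq_single x₀ (fun x _ hne => hbz x hne) (fun h => absurd (Finset.mem_univ x₀) h)] at this
      have haz : ∀ x, x ≠ x₀ → a y x = 0 := by
        intro x hne
        have := hoff x x₀ hne
        rw [hbx₀, mul_one] at this
        exact this
      have hsum : ∑ x, r y * a y x * b y x / p x = r y * a y x₀ * b y x₀ / p x₀ := by
        apply Finset.sum_eq_single x₀
        · intro x _ hne
          rw [haz x hne]; ring
        · intro h; exact absurd (Finset.mem_univ x₀) h
      rw [hsum]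
      have hc := hlam ⟨x₀, x₀, y⟩
      simp only [if_pos rfl] at hc
      rw [div_le_iff₀ (hp x₀)]
      calc r y * a y x₀ * b y x₀ ≤ Real.exp lam * (p x₀ * q y) := hc
        _ = Real.exp lam * q y * p x₀ := by ring
  -- sum over y
  have hsum : ∑ y, ∑ x, r y * a y x * b y x / p x ≤ Real.exp lam := by
    calc ∑ y, ∑ x, r y * a y x * b y x / p x ≤ ∑ y, Real.exp lam * q y :=
          Finset.sum_le_sum (fun y _ => perY y)
      _ = Real.exp lam * ∑ y, q y := by rw [Finset.mul_sum]
      _ = Real.exp lam := by rw [hq1, mul_one]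
  have hval : ∑ y, ∑ x, r y * a y x * b y x / p x = (Fintype.card X : ℝ) := by
    rw [Finset.sum_comm]
    have : ∀ x : X, ∑ y, r y * a y x * b y x / p x = 1 := by
      intro x
      rw [← Finset.sum_div, hmarg x x, if_pos rfl, div_self (ne_of_gt (hp x))]
    rw [Finset.sum_congr rfl (fun x _ => this x)]
    simp [Finset.card_univ]
  rw [hval] at hsum
  exact (Real.log_le_iff_le_exp hcard).mpr hsum

/-- Max common information of perfectly correlated classical randomness:
(i) every classical Markov-chain extension of `χ` has `I↑_max ≥ ln |X|`, and
(ii) the copy extension (with `Y = X`, `r = p`, deterministic copy kernels)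
achieves `I↑_max = ln |X|`.  Hence the minimum over extensions is `ln |X|`. -/
theorem cmax_perfectly_correlated
    {X : Type*} [Fintype X] [DecidableEq X] [Nonempty X]
    (p : X → ℝ) (hp : ∀ x, 0 < p x) (hpsum : ∑ x, p x = 1) :
    (∀ (Y : Type) [Fintype Y] [Nonempty Y],
      ∀ (r : Y → ℝ) (a b : Y → X → ℝ),
        (∀ y, 0 ≤ r y) → (∑ y, r y = 1) →
        (∀ y x, 0 ≤ a y x) → (∀ y, ∑ x, a y x = 1) →
        (∀ y x, 0 ≤ b y x) → (∀ y, ∑ x, b y x = 1) →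
        (∀ x x', ∑ y, r y * a y x * b y x' = (if x = x' then p x else 0)) →
        (Real.log (Fintype.card X) : EReal) ≤ IupmaxCl p r a b) ∧
    IupmaxCl p p (fun y x => if x = y then (1 : ℝ) else 0)
        (fun y x => if x = y then (1 : ℝ) else 0)
      = (Real.log (Fintype.card X) : EReal) := by
  have hcard : (0:ℝ) < Fintype.card X := by exact_mod_cast Fintype.card_pos
  constructor
  · intro Y _ _ r a b hr _ ha ha1 hb hb1 hmarg
    exact key_lb p hp r a b hr ha ha1 hb hb1 hmarg
  · set A : X → X → ℝ := fun y x => if x = y then (1:ℝ) else 0 with hA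
    have hAnn : ∀ y x, 0 ≤ A y x := by
      intro y x; dsimp [A]; split <;> norm_num
    have hA1 : ∀ y, ∑ x, A y x = 1 := by
      intro y; simp [A]
    have hmarg : ∀ x x' : X, ∑ y, p y * A y x * A y x' = (if x = x' then p x else 0) := by
      intro x x'
      by_cases h : x = x'
      · subst h
        rw [Finset.sum_eq_single x]
        · simp [A]
        · intro y _ hne
          dsimp [A]
          rw [if_neg (fun hh => hne hh.symm)]
          ring
        · intro h; exact absurd (Finset.mem_univ x) h
      · rw [if_neg h]
        apply Finset.sum_eq_zero
        intro y _
        dsimp [A]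
        by_cases hx : x = y
        · subst hx
          rw [if_neg (fun hh : x' = x => h hh.symm), mul_zero]
        · rw [if_neg hx]; ring
    have hlb : (Real.log (Fintype.card X) : EReal) ≤ IupmaxCl p p A A :=
      key_lb p hp p A A (fun y => (hp y).le) hAnn hA1 hAnn hA1 hmarg
    have hub : IupmaxCl p p A A ≤ (Real.log (Fintype.card X) : EReal) := by
      have hqmem : ∃ q : X → ℝ, (∀ y, 0 ≤ q y) ∧ (∑ y, q y = 1) ∧
          (DmaxCl (fun t : X × X × X => p t.2.2 * A t.2.2 t.1 * A t.2.2 t.2.1)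
                  (fun t : X × X × X => (if t.1 = t.2.1 then p t.1 else 0) * q t.2.2))
          = DmaxCl (fun t : X × X × X => p t.2.2 * A t.2.2 t.1 * A t.2.2 t.2.1)
                  (fun t : X × X × X => (if t.1 = t.2.1 then p t.1 else 0) * (Fintype.card X : ℝ)⁻¹) := by
        refine ⟨fun _ => (Fintype.card X : ℝ)⁻¹, fun _ => by positivity, ?_, rfl⟩
        rw [Finset.sum_const, nsmul_eq_mul, Finset.card_univ]
        field_simp
      calc IupmaxCl p p A A ≤ DmaxCl (fun t : X × X × X => p t.2.2 * A t.2.2 t.1 * A t.2.2 t.2.1)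
                  (fun t : X × X × X => (if t.1 = t.2.1 then p t.1 else 0) * (Fintype.card X : ℝ)⁻¹) := by
            apply sInf_le
            obtain ⟨q, h1, h2, h3⟩ := hqmem
            exact ⟨q, h1, h2, h3.symm⟩
        _ ≤ (Real.log (Fintype.card X) : EReal) := by
            apply sInf_le
            refine ⟨Real.log (Fintype.card X), rfl, ?_⟩
            rintro ⟨x, x', y⟩
            dsimp [A]
            rw [Real.exp_log hcard]
            have hRnn : (0:ℝ) ≤ (Fintype.card X:ℝ) * ((if x = x' then p x else 0) * (Fintype.card X:ℝ)⁻¹) := by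
              have h0 : (0:ℝ) ≤ (if x = x' then p x else 0) := by
                split_ifs with h; exacts [(hp x).le, le_rfl]
              exact mul_nonneg hcard.le (mul_nonneg h0 (by positivity))
            by_cases hxy : x = y
            · by_cases hx'y : x' = y
              · have hxx' : x = x' := hxy.trans hx'y.symm
                rw [if_pos hxy, if_pos hx'y, if_pos hxx', mul_one, mul_one, hxy]
                have hval : (Fintype.card X:ℝ) * (p y * (Fintype.card X:ℝ)⁻¹) = p y := by
                  field_simp
                rw [hval]
              · rw [if_neg hx'y, mul_zero]
                exact hRnn
            · rw [if_neg hxy, mul_zero, zero_mul]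
              exact hRnn
    exact le_antisymm hub hlb
end
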